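/- Completeness of the generic bisimulation game: for all x, y ∈ {o,b} and all states s, t, if s ≈_{(x,y)} t then s ≡_{E(x,y)} t, i.e. Duplicator wins the E(x,y)-generic bisimulation game from the configuration ⟨(s,t),†,†,*⟩_S. -/

import Mathlib

namespace GamesBisim

/-- Parameter values `o` (ordinary) and `b` (branching) for generic bisimulations. -/
inductive XY | o | b
deriving DecidableEq

/-- The faces ☹ (frown) and ☺ (smile). -/
inductive Face | frown | smile
deriving DecidableEq

/-- Rewards: `*` (star) and `✓` (check). -/
inductive Rw | star | check
deriving DecidableEq

/-- A labelled transition system with states `S`, actions `A` containing a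
distinguished silent action `tau`, and a transition relation. -/
structure LTS (S : Type u) (A : Type v) where
  tau : A
  Trans : S → A → S → Prop

namespace LTS

variable {S : Type u} {A : Type v}

/-- A single silent (τ) step. -/
def TauStep (L : LTS S A) (s s' : S) : Prop := L.Trans s L.tau s'

/-- `↠`: the reflexive-transitive closure of the τ-step relation. -/
def TauStar (L : LTS S A) : S → S → Prop := Relation.ReflTransGen L.TauStep

/-- `↠⁺`: the transitive closure of the τ-step relation. -/
def TauPlus (L : LTS S A) : S → S → Prop := Relation.TransGen L.TauStep

/-- An LTS is non-divergent if it admits no infinite sequence of τ-steps. -/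
def NonDivergent (L : LTS S A) : Prop :=
  ¬ ∃ f : ℕ → S, ∀ i, L.TauStep (f i) (f (i + 1))

/-- A symmetric relation `R` is a branching bisimulation. -/
def IsBranchingBisim (L : LTS S A) (R : S → S → Prop) : Prop :=
  (∀ s t, R s t → R t s) ∧
  ∀ s t a s', R s t → L.Trans s a s' →
    (a = L.tau ∧ R s' t) ∨
    ∃ t1 t', L.TauStar t t1 ∧ L.Trans t1 a t' ∧ R s t1 ∧ R s' t'

/-- Branching bisimilarity `≈b`. -/
def BranchingBisimilar (L : LTS S A) (s t : S) : Prop :=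
  ∃ R, L.IsBranchingBisim R ∧ R s t

/-- A symmetric relation `R` is a delay bisimulation. -/
def IsDelayBisim (L : LTS S A) (R : S → S → Prop) : Prop :=
  (∀ s t, R s t → R t s) ∧
  ∀ s t a s', R s t → L.Trans s a s' →
    (a = L.tau ∧ R s' t) ∨
    ∃ t1 t', L.TauStar t t1 ∧ L.Trans t1 a t' ∧ R s' t'

/-- The generalised weak transition `s ↠_{x,R,t} s'`: a weak transition `s ↠ s'`,
which in case `x = b` additionally satisfies `t R s` and `t R s'`. -/
def GenTauStar (L : LTS S A) (x : XY) (R : S → S → Prop) (t : S) (s s' : S) : Prop :=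
  L.TauStar s s' ∧ (x = XY.b → R t s ∧ R t s')

/-- The strong generalised weak transition `s ⟹_{x,R,t} s'`: a weak transition
`s ↠ s'`, which in case `x = b` is witnessed by a finite τ-path all of whose states
are related to `t` by `R`. -/
def SGenTauStar (L : LTS S A) (x : XY) (R : S → S → Prop) (t : S) (s s' : S) : Prop :=
  L.TauStar s s' ∧
  (x = XY.b → R t s ∧ Relation.ReflTransGen (fun u u' => L.TauStep u u' ∧ R t u') s s')

/-- A symmetric relation `R` is an `(x,y)`-generic bisimulation. -/
def IsGenBisim (L : LTS S A) (x y : XY) (R : S → S → Prop) : Prop :=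
  (∀ s t, R s t → R t s) ∧
  ∀ s t a s', R s t → L.Trans s a s' →
    (a = L.tau ∧ R s' t) ∨
    ∃ t1 t2 t', L.GenTauStar x R s t t1 ∧ L.Trans t1 a t2 ∧
      L.GenTauStar y R s' t2 t' ∧ R s' t'

/-- `(x,y)`-generic bisimilarity `≈_{(x,y)}`. -/
def GenBisimilar (L : LTS S A) (x y : XY) (s t : S) : Prop :=
  ∃ R, L.IsGenBisim x y R ∧ R s t

/-- A symmetric relation `R` is an `(x,y)`-generic bisimulation with explicit
divergence (divergence condition D₄). -/
def IsGenBisimED (L : LTS S A) (x y : XY) (R : S → S → Prop) : Prop :=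
  L.IsGenBisim x y R ∧
  ∀ s t, R s t → ∀ f : ℕ → S, f 0 = s → (∀ i, L.TauStep (f i) (f (i + 1))) →
    ∃ t' k, L.TauPlus t t' ∧ R (f k) t'

/-- `(x,y)`-generic bisimilarity with explicit divergence `≈ed_{(x,y)}`. -/
def GenBisimilarED (L : LTS S A) (x y : XY) (s t : S) : Prop :=
  ∃ R, L.IsGenBisimED x y R ∧ R s t

end LTS

/-- A relation `R` has the stuttering property: whenever
`t₀ →τ t₁ →τ ⋯ →τ t_k` and `t₀ R t_k`, then `t_i R t_j` for all `0 ≤ i,j ≤ k`. -/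
def StutteringProperty {S : Type u} {A : Type v} (L : LTS S A) (R : S → S → Prop) : Prop :=
  ∀ (k : ℕ) (t : ℕ → S),
    (∀ i < k, L.TauStep (t i) (t (i + 1))) → R (t 0) (t k) →
    ∀ i j, i ≤ k → j ≤ k → R (t i) (t j)

/-! ## Two-player games

A play is a maximal (finite or infinite) sequence of configurations connected by
moves, represented as `π : ℕ → Option C` which is `none` from the point (if any)
where the play has ended; a play may only end in a configuration whose owner is
stuck. A strategy for a player is a (positional) function `σ : C → C` which is
required to pick a legal move at every configuration owned by that player admitting
at least one move; a play is consistent with `σ` if every move taken from a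
configuration owned by that player follows `σ`. -/

section Games

variable {C : Type u}

/-- `π` is a maximal play of the game with move relation `move`. -/
def IsPlay (move : C → C → Prop) (π : ℕ → Option C) : Prop :=
  (∀ i c d, π i = some c → π (i + 1) = some d → move c d) ∧
  (∀ i c, π i = some c → π (i + 1) = none → ∀ d, ¬ move c d) ∧
  (∀ i, π i = none → π (i + 1) = none)

/-- The play `π` is consistent with strategy `σ` of the player owning the
configurations satisfying `owned`. -/
def ConsistentWith (owned : C → Prop) (σ : C → C) (π : ℕ → Option C) : Prop :=
  ∀ i c d, π i = some c → owned c → π (i + 1) = some d → d = σ c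

/-- `σ` is a valid strategy for the player owning the configurations satisfying
`owned`: it picks a legal move wherever a move exists. -/
def ValidStrategy (owned : C → Prop) (move : C → C → Prop) (σ : C → C) : Prop :=
  ∀ c, owned c → (∃ d, move c d) → move c (σ c)

/-- The play `π` is finite and ends in the configuration `c`. -/
def EndsAt (π : ℕ → Option C) (c : C) : Prop := ∃ i, π i = some c ∧ π (i + 1) = none

/-- The play `π` is infinite. -/
def InfinitePlay (π : ℕ → Option C) : Prop := ∀ i, π i ≠ none

/-- The Büchi winning condition on infinite plays: the play passes through
infinitely many configurations carrying a `✓` reward. -/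
def BuchiWin (reward : C → Prop) (π : ℕ → Option C) : Prop :=
  ∀ n, ∃ i, n ≤ i ∧ ∃ c, π i = some c ∧ reward c

/-- Duplicator wins the play `π`: either the play is finite and Spoiler is stuck,
or the play is infinite and satisfies the winning condition `infWin`. -/
def DupWinsPlay (dupOwned : C → Prop) (infWin : (ℕ → Option C) → Prop)
    (π : ℕ → Option C) : Prop :=
  (∃ c, EndsAt π c ∧ ¬ dupOwned c) ∨ (InfinitePlay π ∧ infWin π)

/-- Spoiler wins the play `π` (all plays not won by Duplicator). -/
def SpWinsPlay (dupOwned : C → Prop) (infWin : (ℕ → Option C) → Prop)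
    (π : ℕ → Option C) : Prop :=
  (∃ c, EndsAt π c ∧ dupOwned c) ∨ (InfinitePlay π ∧ ¬ infWin π)

/-- Duplicator wins the configuration `c`: she has a strategy winning all plays
starting in `c`. -/
def DupWins (dupOwned : C → Prop) (move : C → C → Prop)
    (infWin : (ℕ → Option C) → Prop) (c : C) : Prop :=
  ∃ σ : C → C, ValidStrategy dupOwned move σ ∧
    ∀ π, IsPlay move π → π 0 = some c → ConsistentWith dupOwned σ π →
      DupWinsPlay dupOwned infWin π

/-- Spoiler wins the configuration `c`: he has a strategy winning all plays
starting in `c`. -/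
def SpWins (dupOwned : C → Prop) (move : C → C → Prop)
    (infWin : (ℕ → Option C) → Prop) (c : C) : Prop :=
  ∃ σ : C → C, ValidStrategy (fun d => ¬ dupOwned d) move σ ∧
    ∀ π, IsPlay move π → π 0 = some c → ConsistentWith (fun d => ¬ dupOwned d) σ π →
      SpWinsPlay dupOwned infWin π

end Games

/-! ## The limited branching bisimulation (lbb) game -/

/-- Configurations of the lbb game: Spoiler-owned `⟨(s,t)⟩` and Duplicator-owned
`⟨(s,t),(a,s')⟩`. -/
inductive LConf (S : Type u) (A : Type v)
  | sp (p : S × S)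
  | dup (p : S × S) (c : A × S)

/-- Ownership in the lbb game. -/
def LConf.dupOwned {S : Type u} {A : Type v} : LConf S A → Prop
  | .sp _ => False
  | .dup _ _ => True

/-- Moves of the lbb game. -/
inductive LMove {S : Type u} {A : Type v} (L : LTS S A) : LConf S A → LConf S A → Prop
  | sp1 {s t a s'} (h : L.Trans s a s') :
      LMove L (LConf.sp (s, t)) (LConf.dup (s, t) (a, s'))
  | sp2 {s t a t'} (h : L.Trans t a t') :
      LMove L (LConf.sp (s, t)) (LConf.dup (t, s) (a, t'))
  | dup1 {u v u'} :
      LMove L (LConf.dup (u, v) (L.tau, u')) (LConf.sp (u', v))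
  | dup2 {u v a u' v'} (h : L.Trans v a v') :
      LMove L (LConf.dup (u, v) (a, u')) (LConf.sp (u', v'))
  | dup3 {u v a u' v'} (h : L.TauStep v v') :
      LMove L (LConf.dup (u, v) (a, u')) (LConf.sp (u, v'))

/-- `s ≡lb t`: Duplicator wins the lbb game from `⟨(s,t)⟩_S`; finite plays are won
by Duplicator iff Spoiler is stuck, and all infinite plays are won by Duplicator. -/
def LTS.lbbEquiv {S : Type u} {A : Type v} (L : LTS S A) (s t : S) : Prop :=
  DupWins LConf.dupOwned (LMove L) (fun _ => True) (LConf.sp (s, t))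

/-! ## The branching bisimulation (bb) game -/

/-- Configurations of the bb game: `⟨(s,t),c,r⟩` owned by Spoiler or Duplicator,
with challenge `c ∈ (A × S) ∪ {†}` (where `none` is `†`) and reward `r`. -/
inductive BConf (S : Type u) (A : Type v)
  | sp (p : S × S) (c : Option (A × S)) (r : Rw)
  | dup (p : S × S) (c : Option (A × S)) (r : Rw)

/-- Ownership in the bb game. -/
def BConf.dupOwned {S : Type u} {A : Type v} : BConf S A → Prop
  | .sp _ _ _ => False
  | .dup _ _ _ => True

/-- The configuration carries a `✓` reward. -/
def BConf.reward {S : Type u} {A : Type v} : BConf S A → Prop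
  | .sp _ _ r => r = Rw.check
  | .dup _ _ r => r = Rw.check

/-- Moves of the bb game. -/
inductive BMove {S : Type u} {A : Type v} (L : LTS S A) : BConf S A → BConf S A → Prop
  | sp1star {s t c r a s'} (h : L.Trans s a s') (hc : c = some (a, s') ∨ c = none) :
      BMove L (BConf.sp (s, t) c r) (BConf.dup (s, t) (some (a, s')) Rw.star)
  | sp1check {s t c r a s'} (h : L.Trans s a s')
      (hc : ¬(c = some (a, s') ∨ c = none)) :
      BMove L (BConf.sp (s, t) c r) (BConf.dup (s, t) (some (a, s')) Rw.check)
  | sp2 {s t c r a t'} (h : L.Trans t a t') :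
      BMove L (BConf.sp (s, t) c r) (BConf.dup (t, s) (some (a, t')) Rw.check)
  | dup1 {u v u' r} :
      BMove L (BConf.dup (u, v) (some (L.tau, u')) r) (BConf.sp (u', v) none Rw.check)
  | dup2 {u v a u' v' r} (h : L.Trans v a v') :
      BMove L (BConf.dup (u, v) (some (a, u')) r) (BConf.sp (u', v') none Rw.check)
  | dup3 {u v a u' v' r} (h : L.TauStep v v') :
      BMove L (BConf.dup (u, v) (some (a, u')) r)
        (BConf.sp (u, v') (some (a, u')) Rw.star)

/-- `s ≡b t`: Duplicator wins the bb game from `⟨(s,t),†,*⟩_S`, where infinite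
plays are won by Duplicator iff they yield infinitely many `✓` rewards. -/
def LTS.bbEquiv {S : Type u} {A : Type v} (L : LTS S A) (s t : S) : Prop :=
  DupWins BConf.dupOwned (BMove L) (BuchiWin BConf.reward) (BConf.sp (s, t) none Rw.star)

/-! ## The generic bisimulation (gb) game, and its explicit-divergence variant -/

/-- Configurations of the generic games: `⟨(s,t),c,m,r⟩` owned by Spoiler or
Duplicator, with challenge `c ∈ (A × S) ∪ {†}`, partial match
`m ∈ (S × {☹,☺}) ∪ {†}` and reward `r`. -/
inductive GConf (S : Type u) (A : Type v)
  | sp (p : S × S) (c : Option (A × S)) (m : Option (S × Face)) (r : Rw)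
  | dup (p : S × S) (c : Option (A × S)) (m : Option (S × Face)) (r : Rw)

/-- Ownership in the generic games. -/
def GConf.dupOwned {S : Type u} {A : Type v} : GConf S A → Prop
  | .sp _ _ _ _ => False
  | .dup _ _ _ _ => True

/-- The configuration carries a `✓` reward. -/
def GConf.reward {S : Type u} {A : Type v} : GConf S A → Prop
  | .sp _ _ _ r => r = Rw.check
  | .dup _ _ _ r => r = Rw.check

/-- Moves of the `E`-generic bisimulation game. The parameter `rw1` is the reward
handed out by Duplicator's rule (1): `✓` in the gb game, `*` in the gbed game. -/
inductive GMove {S : Type u} {A : Type v} (L : LTS S A) (E : Set Face) (rw1 : Rw) :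
    GConf S A → GConf S A → Prop
  | sp1 {s t c m r} (hc : c ≠ none) :
      GMove L E rw1 (GConf.sp (s, t) c m r) (GConf.dup (s, t) c m Rw.star)
  | sp2a {s t m r a s'} (h : L.Trans s a s') :
      GMove L E rw1 (GConf.sp (s, t) none m r)
        (GConf.dup (s, t) (some (a, s')) (some (t, Face.frown)) Rw.star)
  | sp2b {s t c m r a s'} (h : L.Trans s a s') (hc : c ≠ some (a, s')) :
      GMove L E rw1 (GConf.sp (s, t) c m r)
        (GConf.dup (s, t) (some (a, s')) (some (t, Face.frown)) Rw.check)
  | sp3 {s t c m r a t'} (h : L.Trans t a t') :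
      GMove L E rw1 (GConf.sp (s, t) c m r)
        (GConf.dup (t, s) (some (a, t')) (some (s, Face.frown)) Rw.check)
  | dup1 {u v u' vb f r} :
      GMove L E rw1 (GConf.dup (u, v) (some (L.tau, u')) (some (vb, f)) r)
        (GConf.sp (u', vb) none none rw1)
  | dup2a {u v a u' vb v' r} (h : L.Trans vb a v') :
      GMove L E rw1 (GConf.dup (u, v) (some (a, u')) (some (vb, Face.frown)) r)
        (GConf.sp (u', v') (some (a, u')) (some (v', Face.smile)) Rw.star)
  | dup2b {u v a u' vb v' r} (h : L.Trans vb a v') :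
      GMove L E rw1 (GConf.dup (u, v) (some (a, u')) (some (vb, Face.frown)) r)
        (GConf.sp (u', v') none none Rw.check)
  | dup2c {u v a u' vb v' r} (h : L.Trans vb a v') (hE : Face.smile ∈ E) :
      GMove L E rw1 (GConf.dup (u, v) (some (a, u')) (some (vb, Face.frown)) r)
        (GConf.sp (u, v) (some (a, u')) (some (v', Face.smile)) Rw.star)
  | dup3a {u v a u' vb f v' r} (h : L.TauStep vb v') :
      GMove L E rw1 (GConf.dup (u, v) (some (a, u')) (some (vb, f)) r)
        (GConf.sp (u, v') (some (a, u')) (some (v', f)) Rw.star)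
  | dup3b {u v a u' vb v' r} (h : L.TauStep vb v') :
      GMove L E rw1 (GConf.dup (u, v) (some (a, u')) (some (vb, Face.smile)) r)
        (GConf.sp (u', v') none none Rw.check)
  | dup3c {u v a u' vb f v' r} (h : L.TauStep vb v') (hE : f ∈ E) :
      GMove L E rw1 (GConf.dup (u, v) (some (a, u')) (some (vb, f)) r)
        (GConf.sp (u, v) (some (a, u')) (some (v', f)) Rw.star)

/-- `E(x,y) ⊆ {☹,☺}`: the smallest set containing `☹` when `x = o` and `☺` when
`y = o`. -/
def Exy (x y : XY) : Set Face :=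
  {f | (f = Face.frown ∧ x = XY.o) ∨ (f = Face.smile ∧ y = XY.o)}

/-- `s ≡_E t`: Duplicator wins the `E`-generic bisimulation game from
`⟨(s,t),†,†,*⟩_S`; infinite plays are won by Duplicator iff they yield infinitely
many `✓` rewards. -/
def LTS.gbEquiv {S : Type u} {A : Type v} (L : LTS S A) (E : Set Face) (s t : S) : Prop :=
  DupWins GConf.dupOwned (GMove L E Rw.check) (BuchiWin GConf.reward)
    (GConf.sp (s, t) none none Rw.star)

/-- `s ≡ed_E t`: Duplicator wins the `E`-generic bisimulation with explicit
divergence game from `⟨(s,t),†,†,*⟩_S`. -/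
def LTS.gbedEquiv {S : Type u} {A : Type v} (L : LTS S A) (E : Set Face) (s t : S) : Prop :=
  DupWins GConf.dupOwned (GMove L E Rw.star) (BuchiWin GConf.reward)
    (GConf.sp (s, t) none none Rw.star)

/-- The abstraction function `f(⟨(s,t),c,m,r⟩) = ⟨(s,t),c,r⟩` from configurations
of the generic game to configurations of the bb game, preserving ownership. -/
def fabs {S : Type u} {A : Type v} : GConf S A → BConf S A
  | .sp p c _ r => .sp p c r
  | .dup p c _ r => .dup p c r



/-! ### Auxiliary material for the completeness proof (Statement 8) -/

namespace Compl

open Relation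

variable {S : Type u} {A : Type v}

/-- Indexed chains of a step relation. -/
def Chn (r : S → S → Prop) : ℕ → S → S → Prop
  | 0, a, b => b = a
  | n+1, a, b => ∃ c, r a c ∧ Chn r n c b

theorem chn_snoc {r : S → S → Prop} : ∀ {n : ℕ} {a b c : S},
    Chn r n a b → r b c → Chn r (n+1) a c := by
  intro n
  induction n with
  | zero => intro a b c h hbc; cases h; exact ⟨c, hbc, rfl⟩
  | succ n ih =>
    intro a b c h hbc
    obtain ⟨d, had, hd⟩ := h
    exact ⟨d, had, ih hd hbc⟩

theorem chn_exists {r : S → S → Prop} {a b : S} (h : ReflTransGen r a b) :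
    ∃ n, Chn r n a b := by
  induction h with
  | refl => exact ⟨0, rfl⟩
  | tail _ hbc ih => obtain ⟨n, hn⟩ := ih; exact ⟨n+1, chn_snoc hn hbc⟩

theorem rtg_of_chn {r : S → S → Prop} : ∀ {n : ℕ} {a b : S}, Chn r n a b → ReflTransGen r a b := by
  intro n
  induction n with
  | zero => intro a b h; cases h; exact .refl
  | succ n ih =>
    intro a b h
    obtain ⟨c, hac, h⟩ := h
    exact .head hac (ih h)

/-- Strengthened τ-step used on the pre-path. -/
def PreStep (L : LTS S A) (x : XY) (R : S → S → Prop) (u : S) (p q : S) : Prop :=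
  L.TauStep p q ∧ (x = XY.b → R u q)

/-- A "good" relation: symmetric, with strengthened generic-bisimulation transfer. -/
def GoodR (L : LTS S A) (x y : XY) (R : S → S → Prop) : Prop :=
  (∀ s t, R s t → R t s) ∧
  ∀ s t a s', R s t → L.Trans s a s' →
    (a = L.tau ∧ R s' t) ∨
    ∃ t1 t2 t', ReflTransGen (PreStep L x R s) t t1 ∧ L.Trans t1 a t2 ∧
      (y = XY.b → R s' t2) ∧ L.TauStar t2 t' ∧ R s' t'

theorem goodR_o {L : LTS S A} {y : XY} {R : S → S → Prop} (hR : L.IsGenBisim XY.o y R) :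
    GoodR L XY.o y R := by
  refine ⟨hR.1, fun s t a s' hst hs => ?_⟩
  rcases hR.2 s t a s' hst hs with h | ⟨t1, t2, t', h1, h2, h3, h4⟩
  · exact Or.inl h
  · refine Or.inr ⟨t1, t2, t', ?_, h2, fun hy => (h3.2 hy).1, h3.1, h4⟩
    exact ReflTransGen.mono (fun p q hq => ⟨hq, fun hc => absurd hc (by decide)⟩) _ _ h1.1

/-! #### Semi-generic bisimulations with `x = b` -/

/-- Semi-generic bisimulation (`x = b` baked in, `y` a parameter). -/
def Semi (L : LTS S A) (y : XY) (R : S → S → Prop) : Prop :=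
  (∀ s t, R s t → R t s) ∧
  ∀ s t a s', R s t → L.Trans s a s' →
    (a = L.tau ∧ ∃ t'', L.TauStar t t'' ∧ R s' t'' ∧ (y = XY.b → R s t'')) ∨
    (∃ t1 t2 t', L.TauStar t t1 ∧ L.Trans t1 a t2 ∧ L.TauStar t2 t' ∧
      R s t ∧ R s t1 ∧ (y = XY.b → R s' t2 ∧ R s' t') ∧ R s' t')

/-- Semi-generic bisimilarity. -/
def SB (L : LTS S A) (y : XY) (s t : S) : Prop := ∃ R, Semi L y R ∧ R s t

variable {L : LTS S A} {y : XY}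

theorem SB_symm {s t : S} (h : SB L y s t) : SB L y t s := by
  obtain ⟨R, hR, hst⟩ := h; exact ⟨R, hR, hR.1 _ _ hst⟩

theorem SB_semi : Semi L y (SB L y) := by
  constructor
  · exact fun s t h => SB_symm h
  · rintro s t a s' ⟨R, hR, hst⟩ hs
    rcases hR.2 s t a s' hst hs with ⟨ha, t'', h1, h2, h3⟩ |
      ⟨t1, t2, t', h1, h2, h3, h4, h5, h6, h7⟩
    · exact Or.inl ⟨ha, t'', h1, ⟨R, hR, h2⟩, fun hy => ⟨R, hR, h3 hy⟩⟩
    · exact Or.inr ⟨t1, t2, t', h1, h2, h3, ⟨R, hR, h4⟩, ⟨R, hR, h5⟩,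
        fun hy => ⟨⟨R, hR, (h6 hy).1⟩, ⟨R, hR, (h6 hy).2⟩⟩, ⟨R, hR, h7⟩⟩

theorem SB_refl (s : S) : SB L y s s := by
  refine ⟨Eq, ⟨fun a b h => h.symm, ?_⟩, rfl⟩
  intro s t a s' hst hs
  cases hst
  exact Or.inr ⟨s, s', s', .refl, hs, .refl, rfl, rfl, fun _ => ⟨rfl, rfl⟩, rfl⟩

theorem semi_lift {R : S → S → Prop} (hR : Semi L y R) :
    ∀ {u u' : S}, L.TauStar u u' → ∀ {t : S}, R u t → ∃ t', L.TauStar t t' ∧ R u' t' := by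
  intro u u' h
  induction h using Relation.ReflTransGen.head_induction_on with
  | refl => exact fun {t} hut => ⟨t, .refl, hut⟩
  | head hstep _ ih =>
    intro t hut
    rcases hR.2 _ _ _ _ hut hstep with ⟨_, t'', h1, h2, _⟩ |
      ⟨t1, t2, t', h1, h2, h3, _, _, _, h7⟩
    · obtain ⟨t₂, hs, hr⟩ := ih h2
      exact ⟨t₂, h1.trans hs, hr⟩
    · obtain ⟨t₂, hs, hr⟩ := ih h7
      exact ⟨t₂, (h1.trans (ReflTransGen.head h2 h3)).trans hs, hr⟩

theorem comp_transfer {R1 R2 T : S → S → Prop} (h1 : Semi L y R1) (h2 : Semi L y R2)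
    (hT : ∀ a c, (∃ b, R1 a b ∧ R2 b c) → T a c) :
    ∀ {s u t a s'}, R1 s u → R2 u t → L.Trans s a s' →
      (a = L.tau ∧ ∃ t'', L.TauStar t t'' ∧ T s' t'' ∧ (y = XY.b → T s t'')) ∨
      (∃ t1 t2 t', L.TauStar t t1 ∧ L.Trans t1 a t2 ∧ L.TauStar t2 t' ∧
        T s t ∧ T s t1 ∧ (y = XY.b → T s' t2 ∧ T s' t') ∧ T s' t') := by
  intro s u t a s' hsu hut hs
  rcases h1.2 s u a s' hsu hs with ⟨ha, u'', hu1, hu2, hu3⟩ |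
    ⟨u1, u2, u3, hp1, hp2, hp3, hq0, hq1, hqy, hq3⟩
  · obtain ⟨th, ht1, ht2⟩ := semi_lift h2 hu1 hut
    exact Or.inl ⟨ha, th, ht1, hT _ _ ⟨u'', hu2, ht2⟩, fun hy => hT _ _ ⟨u'', hu3 hy, ht2⟩⟩
  · obtain ⟨th, htth, hu1th⟩ := semi_lift h2 hp1 hut
    rcases h2.2 u1 th a u2 hu1th hp2 with ⟨ha, t₂, hv1, hv2, hv3⟩ |
      ⟨m1, m2, m3, hm1, hm2, hm3, hw0, hw1, hwy, hw3⟩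
    · by_cases hy : y = XY.b
      · exact Or.inl ⟨ha, t₂, htth.trans hv1, hT _ _ ⟨u2, (hqy hy).1, hv2⟩,
          fun _ => hT _ _ ⟨u1, hq1, hv3 hy⟩⟩
      · obtain ⟨T', hT1, hT2⟩ := semi_lift h2 hp3 hv2
        exact Or.inl ⟨ha, T', (htth.trans hv1).trans hT1, hT _ _ ⟨u3, hq3, hT2⟩,
          fun h => absurd h hy⟩
    · obtain ⟨M, hM1, hM2⟩ := semi_lift h2 hp3 hw3
      exact Or.inr ⟨m1, m2, M, htth.trans hm1, hm2, hm3.trans hM1,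
        hT _ _ ⟨u, hq0, hut⟩, hT _ _ ⟨u1, hq1, hw1⟩,
        fun hy => ⟨hT _ _ ⟨u2, (hqy hy).1, (hwy hy).1⟩, hT _ _ ⟨u3, hq3, hM2⟩⟩,
        hT _ _ ⟨u3, hq3, hM2⟩⟩

theorem SB_trans {s u t : S} (hsu : SB L y s u) (hut : SB L y u t) : SB L y s t := by
  obtain ⟨R1, h1, hsu⟩ := hsu
  obtain ⟨R2, h2, hut⟩ := hut
  refine ⟨fun a c => (∃ b, R1 a b ∧ R2 b c) ∨ (∃ b, R2 a b ∧ R1 b c), ⟨?_, ?_⟩,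
    Or.inl ⟨u, hsu, hut⟩⟩
  · rintro p q (⟨b, hab, hbc⟩ | ⟨b, hab, hbc⟩)
    · exact Or.inr ⟨b, h2.1 _ _ hbc, h1.1 _ _ hab⟩
    · exact Or.inl ⟨b, h1.1 _ _ hbc, h2.1 _ _ hab⟩
  · rintro p q a p' (⟨b, hab, hbc⟩ | ⟨b, hab, hbc⟩) hp
    · exact comp_transfer (T := fun a c => (∃ b, R1 a b ∧ R2 b c) ∨ (∃ b, R2 a b ∧ R1 b c))
        h1 h2 (fun a c hh => Or.inl hh) hab hbc hp
    · exact comp_transfer (T := fun a c => (∃ b, R1 a b ∧ R2 b c) ∨ (∃ b, R2 a b ∧ R1 b c))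
        h2 h1 (fun a c hh => Or.inr hh) hab hbc hp

/-- The stuttering property of semi-generic bisimilarity, relational form. -/
theorem SB_st {p q u v : S} (hpq : SB L y p q) (h1 : L.TauStar p u) (h2 : L.TauStar u v)
    (h3 : L.TauStar v q) : SB L y u v := by
  refine ⟨fun a b => SB L y a b ∨
      (∃ p q, SB L y p q ∧ L.TauStar p a ∧ L.TauStar a b ∧ L.TauStar b q) ∨
      (∃ p q, SB L y p q ∧ L.TauStar p b ∧ L.TauStar b a ∧ L.TauStar a q), ⟨?_, ?_⟩,
    Or.inr (Or.inl ⟨p, q, hpq, h1, h2, h3⟩)⟩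
  · rintro s t (h | ⟨P, Q, hPQ, ha, hb, hc⟩ | ⟨P, Q, hPQ, ha, hb, hc⟩)
    · exact Or.inl (SB_symm h)
    · exact Or.inr (Or.inr ⟨P, Q, hPQ, ha, hb, hc⟩)
    · exact Or.inr (Or.inl ⟨P, Q, hPQ, ha, hb, hc⟩)
  · rintro s t a s' (hst | ⟨P, Q, hPQ, hPs, hst', htQ⟩ | ⟨P, Q, hPQ, hPt, hts, hsQ⟩) hs
    · rcases SB_semi.2 s t a s' hst hs with ⟨ha, t'', d1, d2, d3⟩ |
        ⟨t1, t2, t', d1, d2, d3, d4, d5, d6, d7⟩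
      · exact Or.inl ⟨ha, t'', d1, Or.inl d2, fun hy => Or.inl (d3 hy)⟩
      · exact Or.inr ⟨t1, t2, t', d1, d2, d3, Or.inl d4, Or.inl d5,
          fun hy => ⟨Or.inl (d6 hy).1, Or.inl (d6 hy).2⟩, Or.inl d7⟩
    · obtain ⟨q1, hQq1, hsq1⟩ := semi_lift SB_semi hPs hPQ
      rcases SB_semi.2 s q1 a s' hsq1 hs with ⟨ha, q2, d1, d2, d3⟩ |
        ⟨m1, m2, m3, d1, d2, d3, d4, d5, d6, d7⟩
      · exact Or.inl ⟨ha, q2, htQ.trans (hQq1.trans d1), Or.inl d2, fun hy => Or.inl (d3 hy)⟩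
      · exact Or.inr ⟨m1, m2, m3, htQ.trans (hQq1.trans d1), d2, d3,
          Or.inr (Or.inl ⟨P, Q, hPQ, hPs, hst', htQ⟩), Or.inl d5,
          fun hy => ⟨Or.inl (d6 hy).1, Or.inl (d6 hy).2⟩, Or.inl d7⟩
    · obtain ⟨q1, hQq1, hsq1⟩ := semi_lift SB_semi (hPt.trans hts) hPQ
      rcases SB_semi.2 s q1 a s' hsq1 hs with ⟨ha, q2, d1, d2, d3⟩ |
        ⟨m1, m2, m3, d1, d2, d3, d4, d5, d6, d7⟩
      · exact Or.inl ⟨ha, q2, hts.trans (hsQ.trans (hQq1.trans d1)), Or.inl d2,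
          fun hy => Or.inl (d3 hy)⟩
      · exact Or.inr ⟨m1, m2, m3, hts.trans (hsQ.trans (hQq1.trans d1)), d2, d3,
          Or.inr (Or.inr ⟨P, Q, hPQ, hPt, hts, hsQ⟩), Or.inl d5,
          fun hy => ⟨Or.inl (d6 hy).1, Or.inl (d6 hy).2⟩, Or.inl d7⟩

theorem SB_chain {s : S} : ∀ {t t1 : S}, L.TauStar t t1 → SB L y s t → SB L y s t1 →
    ReflTransGen (fun p q => L.TauStep p q ∧ SB L y s q) t t1 := by
  intro t t1 h
  induction h using Relation.ReflTransGen.head_induction_on with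
  | refl => exact fun _ _ => .refl
  | @head a c hac hcb ih =>
    intro hst hst1
    have hat1 : SB L y a t1 := SB_trans (SB_symm hst) hst1
    have hac' : SB L y a c := SB_st hat1 .refl (ReflTransGen.single hac) hcb
    have hsc : SB L y s c := SB_trans hst hac'
    exact ReflTransGen.head ⟨hac, hsc⟩ (ih hsc hst1)

theorem semi_of_genB {R : S → S → Prop} (hR : L.IsGenBisim XY.b y R) : Semi L y R := by
  refine ⟨hR.1, fun s t a s' hst hs => ?_⟩
  rcases hR.2 s t a s' hst hs with ⟨ha, h'⟩ | ⟨t1, t2, t', ⟨g1, g2⟩, h2, ⟨g3, g4⟩, h4⟩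
  · exact Or.inl ⟨ha, t, .refl, h', fun _ => hst⟩
  · have hb := g2 rfl
    exact Or.inr ⟨t1, t2, t', g1, h2, g3, hb.1, hb.2, fun hy => g4 hy, h4⟩

theorem goodR_b : GoodR L XY.b y (SB L y) := by
  refine ⟨fun s t h => SB_symm h, fun s t a s' hst hs => ?_⟩
  have chmono : ∀ {t t1 : S}, SB L y s t → SB L y s t1 → L.TauStar t t1 →
      ReflTransGen (PreStep L XY.b (SB L y) s) t t1 := fun h1 h2 h3 =>
    ReflTransGen.mono (fun p q hq => ⟨hq.1, fun _ => hq.2⟩) _ _ (SB_chain h3 h1 h2)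
  rcases SB_semi.2 s t a s' hst hs with ⟨ha, t'', h1, h2, h3⟩ |
    ⟨t1, t2, t', hp1, hp2, hp3, hq0, hq1, hqy, hq3⟩
  · rcases Relation.ReflTransGen.cases_head h1 with heq | ⟨r, hstep, hrest⟩
    · subst heq; exact Or.inl ⟨ha, h2⟩
    · by_cases hy : y = XY.b
      · have hst'' : SB L y s t'' := h3 hy
        have htt'' : SB L y t t'' := SB_trans (SB_symm hst) hst''
        rcases Relation.ReflTransGen.cases_tail h1 with heq | ⟨w, hw1, hw2⟩
        · rw [heq] at h2; exact Or.inl ⟨ha, h2⟩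
        · have htw : SB L y t w := SB_st htt'' .refl hw1 (ReflTransGen.single hw2)
          have hsw : SB L y s w := SB_trans hst htw
          refine Or.inr ⟨w, t'', t'', chmono hst hsw hw1, ?_, fun _ => h2, .refl, h2⟩
          rw [ha]; exact hw2
      · refine Or.inr ⟨t, r, t'', .refl, ?_, fun h => absurd h hy, hrest, h2⟩
        rw [ha]; exact hstep
  · exact Or.inr ⟨t1, t2, t', chmono hst hq1 hp1, hp2, fun hy => (hqy hy).1, hp3, hq3⟩


/-! #### The game part: Duplicator's strategy -/

section Game

open scoped Classical

variable (L : LTS S A) (x y : XY) (R : S → S → Prop)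

/-- Duplicator's remaining task at a `☹` position, with measure `n`. -/
def AN (u : S) (a : A) (u' w : S) (n : ℕ) : Prop :=
  (n = 0 ∧ a = L.tau ∧ R u' w) ∨
  ∃ j k t1 t2 t', n = j + k + 1 ∧ Chn (PreStep L x R u) j w t1 ∧ L.Trans t1 a t2 ∧
    (y = XY.b → R u' t2) ∧ Chn L.TauStep k t2 t' ∧ R u' t'

/-- Duplicator's remaining task at a `☺` position, with measure `k`. -/
def SN (u' w : S) (k : ℕ) : Prop := 1 ≤ k ∧ ∃ t', Chn L.TauStep k w t' ∧ R u' t'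

/-- The invariant maintained by Duplicator. -/
def Inv : GConf S A → Prop
  | .sp (u, v) none none _ => R u v
  | .sp (u, v) (some (a, u')) (some (w, Face.frown)) _ => R u v ∧ ∃ n, AN L x y R u a u' w n
  | .sp (u, v) (some (a, u')) (some (w, Face.smile)) _ =>
      y = XY.o ∧ R u v ∧ ∃ k, SN L R u' w k
  | .dup (u, v) (some (a, u')) (some (w, Face.frown)) _ => R u v ∧ ∃ n, AN L x y R u a u' w n
  | .dup (u, v) (some (a, u')) (some (w, Face.smile)) _ =>
      y = XY.o ∧ R u v ∧ ∃ k, SN L R u' w k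
  | _ => False

noncomputable def MeasF (u : S) (a : A) (u' w : S) : ℕ :=
  if h : ∃ n, AN L x y R u a u' w n then Nat.find h else 0

noncomputable def MeasS (u' w : S) : ℕ :=
  if h : ∃ k, SN L R u' w k then Nat.find h else 0

/-- Fallback moves at `☹` Duplicator configurations (for strategy validity). -/
noncomputable def fbF (u v : S) (a : A) (u' w : S) : GConf S A :=
  if a = L.tau then .sp (u', w) none none Rw.check
  else if h2 : ∃ t2, L.Trans w a t2 then .sp (u', h2.choose) none none Rw.check
  else if h3 : ∃ w', L.TauStep w w' then
    .sp (u, h3.choose) (some (a, u')) (some (h3.choose, Face.frown)) Rw.star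
  else .dup (u, v) (some (a, u')) (some (w, Face.frown)) Rw.star

/-- Fallback moves at `☺` Duplicator configurations. -/
noncomputable def fbS (u v : S) (a : A) (u' w : S) : GConf S A :=
  if a = L.tau then .sp (u', w) none none Rw.check
  else if h3 : ∃ w', L.TauStep w w' then
    .sp (u, h3.choose) (some (a, u')) (some (h3.choose, Face.smile)) Rw.star
  else .dup (u, v) (some (a, u')) (some (w, Face.smile)) Rw.star

/-- Duplicator's positional strategy. -/
noncomputable def sig : GConf S A → GConf S A
  | .dup (u, v) (some (a, u')) (some (w, Face.frown)) _ =>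
    if h0 : a = L.tau ∧ R u' w then .sp (u', w) none none Rw.check
    else if hb : ∃ t2, L.Trans w a t2 ∧ R u' t2 then .sp (u', hb.choose) none none Rw.check
    else if hc : y = XY.o ∧ ∃ t2, L.Trans w a t2 ∧ ∃ k t', Chn L.TauStep (k+1) t2 t' ∧ R u' t'
      then .sp (u, v) (some (a, u')) (some (hc.2.choose, Face.smile)) Rw.star
    else if hd : ∃ w', PreStep L x R u w w' ∧
        ∃ n', n' + 1 = MeasF L x y R u a u' w ∧ AN L x y R u a u' w' n' then
      if x = XY.b then .sp (u, hd.choose) (some (a, u')) (some (hd.choose, Face.frown)) Rw.star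
      else .sp (u, v) (some (a, u')) (some (hd.choose, Face.frown)) Rw.star
    else fbF L u v a u' w
  | .dup (u, v) (some (a, u')) (some (w, Face.smile)) _ =>
    if g1 : ∃ w', L.TauStep w w' ∧ R u' w' then .sp (u', g1.choose) none none Rw.check
    else if g2 : y = XY.o ∧ ∃ w₂, L.TauStep w w₂ ∧
        ∃ k', k' + 1 = MeasS L R u' w ∧ SN L R u' w₂ k'
      then .sp (u, v) (some (a, u')) (some (g2.2.choose, Face.smile)) Rw.star
    else fbS L u v a u' w
  | c => c

variable {L x y R}

theorem smile_mem : Face.smile ∈ Exy x y ↔ y = XY.o := by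
  simp [Exy]

theorem frown_mem : Face.frown ∈ Exy x y ↔ x = XY.o := by
  simp [Exy]

theorem an_exists (hG : GoodR L x y R) {u w : S} {a : A} {u' : S}
    (hR : R u w) (h : L.Trans u a u') : ∃ n, AN L x y R u a u' w n := by
  rcases hG.2 u w a u' hR h with ⟨ha, h'⟩ | ⟨t1, t2, t', h1, h2, h3, h4, h5⟩
  · exact ⟨0, Or.inl ⟨rfl, ha, h'⟩⟩
  · obtain ⟨j, hj⟩ := chn_exists h1
    obtain ⟨k, hk⟩ := chn_exists h4
    exact ⟨j + k + 1, Or.inr ⟨j, k, t1, t2, t', rfl, hj, h2, h3, hk, h5⟩⟩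

theorem inv_sp_rel : ∀ {u v : S} {c m r'}, Inv L x y R (GConf.sp (u, v) c m r') → R u v := by
  intro u v c m r' h
  match c, m with
  | none, none => exact h
  | some (a, u'), some (w, Face.frown) => exact h.1
  | some (a, u'), some (w, Face.smile) => exact h.2.1
  | none, some p => exact h.elim
  | some p, none => exact h.elim

theorem inv_sp_to_dup : ∀ {u v : S} {c m r' r''}, c ≠ none →
    Inv L x y R (GConf.sp (u, v) c m r') → Inv L x y R (GConf.dup (u, v) c m r'') := by
  intro u v c m r' r'' hc h
  match c, m with
  | none, none => exact absurd rfl hc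
  | some (a, u'), some (w, Face.frown) => exact h
  | some (a, u'), some (w, Face.smile) => exact h
  | none, some p => exact h.elim
  | some p, none => exact h.elim

theorem x_cases (hx : x ≠ XY.b) : x = XY.o := by cases x with
  | o => rfl
  | b => exact absurd rfl hx

theorem y_cases (hy : y ≠ XY.b) : y = XY.o := by cases y with
  | o => rfl
  | b => exact absurd rfl hy

theorem measF_eq {u : S} {a : A} {u' w : S} (hA : ∃ n, AN L x y R u a u' w n) :
    MeasF L x y R u a u' w = Nat.find hA := by
  unfold MeasF; rw [dif_pos hA]

theorem measS_eq {u' w : S} (gS : ∃ k, SN L R u' w k) :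
    MeasS L R u' w = Nat.find gS := by
  unfold MeasS; rw [dif_pos gS]

theorem frown_cover {u : S} {a : A} {u' w : S}
    (h0 : ¬(a = L.tau ∧ R u' w)) (hb : ¬∃ t2, L.Trans w a t2 ∧ R u' t2)
    (hc : ¬(y = XY.o ∧ ∃ t2, L.Trans w a t2 ∧ ∃ k t', Chn L.TauStep (k+1) t2 t' ∧ R u' t'))
    (hA : ∃ n, AN L x y R u a u' w n) :
    ∃ w', PreStep L x R u w w' ∧
      ∃ n', n' + 1 = MeasF L x y R u a u' w ∧ AN L x y R u a u' w' n' := by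
  rw [measF_eq hA]
  have hn := Nat.find_spec hA
  rcases hn with ⟨hn0, ha, hr⟩ | ⟨j, k, t1, t2, t', hsum, hx1, htr, hy2, hcy, hrt⟩
  · exact absurd ⟨ha, hr⟩ h0
  · cases j with
    | zero =>
      have ht1 : t1 = w := hx1
      subst ht1
      by_cases hyb : y = XY.b
      · exact absurd ⟨t2, htr, hy2 hyb⟩ hb
      · have hyo : y = XY.o := y_cases hyb
        cases k with
        | zero =>
          have ht' : t' = t2 := hcy
          rw [ht'] at hrt
          exact absurd ⟨t2, htr, hrt⟩ hb
        | succ k => exact absurd ⟨hyo, t2, htr, k, t', hcy, hrt⟩ hc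
    | succ j =>
      obtain ⟨w', hstep, hch⟩ := hx1
      exact ⟨w', hstep, j + k + 1, by omega,
        Or.inr ⟨j, k, t1, t2, t', rfl, hch, htr, hy2, hcy, hrt⟩⟩

theorem smile_cover {u' w : S} (g1 : ¬∃ w', L.TauStep w w' ∧ R u' w')
    (gS : ∃ k, SN L R u' w k) :
    ∃ w₂, L.TauStep w w₂ ∧ ∃ k', k' + 1 = MeasS L R u' w ∧ SN L R u' w₂ k' := by
  rw [measS_eq gS]
  obtain ⟨hk1, t', hchn, hrt⟩ := Nat.find_spec gS
  obtain ⟨m, hm⟩ : ∃ m, Nat.find gS = m + 1 := ⟨Nat.find gS - 1, by omega⟩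
  rw [hm] at hchn
  obtain ⟨w₂, hstep, hch⟩ := hchn
  cases m with
  | zero =>
    have ht' : t' = w₂ := hch
    rw [ht'] at hrt
    exact absurd ⟨w₂, hstep, hrt⟩ g1
  | succ m =>
    exact ⟨w₂, hstep, m + 1, by omega, ⟨by omega, t', hch, hrt⟩⟩

theorem sig_frown_spec (hG : GoodR L x y R) {u v : S} {a : A} {u' w : S} {r : Rw}
    (hInv : Inv L x y R (GConf.dup (u, v) (some (a, u')) (some (w, Face.frown)) r)) :
    GMove L (Exy x y) Rw.check (GConf.dup (u, v) (some (a, u')) (some (w, Face.frown)) r)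
      (sig L x y R (GConf.dup (u, v) (some (a, u')) (some (w, Face.frown)) r)) ∧
    Inv L x y R (sig L x y R (GConf.dup (u, v) (some (a, u')) (some (w, Face.frown)) r)) ∧
    ((∃ p, sig L x y R (GConf.dup (u, v) (some (a, u')) (some (w, Face.frown)) r)
        = GConf.sp p none none Rw.check) ∨
     (∃ p w₂, sig L x y R (GConf.dup (u, v) (some (a, u')) (some (w, Face.frown)) r)
        = GConf.sp p (some (a, u')) (some (w₂, Face.smile)) Rw.star) ∨
     (∃ v₂ w₂, sig L x y R (GConf.dup (u, v) (some (a, u')) (some (w, Face.frown)) r)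
        = GConf.sp (u, v₂) (some (a, u')) (some (w₂, Face.frown)) Rw.star ∧
        MeasF L x y R u a u' w₂ < MeasF L x y R u a u' w)) := by
  obtain ⟨huv, hAex⟩ := hInv
  simp only [sig]
  split_ifs with h0 hb hc hd hx
  · obtain ⟨ha, hr⟩ := h0
    subst ha
    exact ⟨GMove.dup1, hr, Or.inl ⟨_, rfl⟩⟩
  · obtain ⟨htr, hrt⟩ := hb.choose_spec
    exact ⟨GMove.dup2b htr, hrt, Or.inl ⟨_, rfl⟩⟩
  · obtain ⟨htr, k, t', hcy, hrt⟩ := hc.2.choose_spec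
    exact ⟨GMove.dup2c htr (smile_mem.mpr hc.1),
      ⟨hc.1, huv, k + 1, by omega, t', hcy, hrt⟩, Or.inr (Or.inl ⟨_, _, rfl⟩)⟩
  · obtain ⟨hpre, n', hn', hAN⟩ := hd.choose_spec
    have hm1 : MeasF L x y R u a u' hd.choose ≤ n' := by
      rw [measF_eq ⟨n', hAN⟩]
      exact Nat.find_le hAN
    exact ⟨GMove.dup3a hpre.1, ⟨hpre.2 hx, n', hAN⟩,
      Or.inr (Or.inr ⟨_, _, rfl, by omega⟩)⟩
  · obtain ⟨hpre, n', hn', hAN⟩ := hd.choose_spec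
    have hm1 : MeasF L x y R u a u' hd.choose ≤ n' := by
      rw [measF_eq ⟨n', hAN⟩]
      exact Nat.find_le hAN
    exact ⟨GMove.dup3c hpre.1 (frown_mem.mpr (x_cases hx)), ⟨huv, n', hAN⟩,
      Or.inr (Or.inr ⟨_, _, rfl, by omega⟩)⟩
  · exact absurd (frown_cover h0 hb hc hAex) hd

theorem sig_smile_spec {u v : S} {a : A} {u' w : S} {r : Rw}
    (hInv : Inv L x y R (GConf.dup (u, v) (some (a, u')) (some (w, Face.smile)) r)) :
    GMove L (Exy x y) Rw.check (GConf.dup (u, v) (some (a, u')) (some (w, Face.smile)) r)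
      (sig L x y R (GConf.dup (u, v) (some (a, u')) (some (w, Face.smile)) r)) ∧
    Inv L x y R (sig L x y R (GConf.dup (u, v) (some (a, u')) (some (w, Face.smile)) r)) ∧
    ((∃ p, sig L x y R (GConf.dup (u, v) (some (a, u')) (some (w, Face.smile)) r)
        = GConf.sp p none none Rw.check) ∨
     (∃ p w₂, sig L x y R (GConf.dup (u, v) (some (a, u')) (some (w, Face.smile)) r)
        = GConf.sp p (some (a, u')) (some (w₂, Face.smile)) Rw.star ∧
        MeasS L R u' w₂ < MeasS L R u' w)) := by
  obtain ⟨hyo, huv, hSex⟩ := hInv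
  simp only [sig]
  split_ifs with g1 g2
  · obtain ⟨hstep, hrt⟩ := g1.choose_spec
    exact ⟨GMove.dup3b hstep, hrt, Or.inl ⟨_, rfl⟩⟩
  · obtain ⟨hstep, k', hk', hSN⟩ := g2.2.choose_spec
    have hm1 : MeasS L R u' g2.2.choose ≤ k' := by
      rw [measS_eq ⟨k', hSN⟩]
      exact Nat.find_le hSN
    exact ⟨GMove.dup3c hstep (smile_mem.mpr hyo), ⟨hyo, huv, k', hSN⟩,
      Or.inr ⟨_, _, rfl, by omega⟩⟩
  · exact absurd ⟨hyo, smile_cover g1 hSex⟩ g2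

theorem sp_step (hG : GoodR L x y R) {p : S × S} {c m r d}
    (hInv : Inv L x y R (GConf.sp p c m r))
    (hmv : GMove L (Exy x y) Rw.check (GConf.sp p c m r) d) : Inv L x y R d := by
  obtain ⟨u, v⟩ := p
  cases hmv with
  | sp1 hcn => exact inv_sp_to_dup hcn hInv
  | sp2a h =>
    cases m with
    | none => exact ⟨hInv, an_exists hG hInv h⟩
    | some q => exact hInv.elim
  | sp2b h hcn =>
    exact ⟨inv_sp_rel hInv, an_exists hG (inv_sp_rel hInv) h⟩
  | sp3 h =>
    exact ⟨hG.1 _ _ (inv_sp_rel hInv), an_exists hG (hG.1 _ _ (inv_sp_rel hInv)) h⟩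

theorem fbF_valid {u v : S} {a : A} {u' w : S} {r : Rw} {d : GConf S A}
    (hex : GMove L (Exy x y) Rw.check
      (GConf.dup (u, v) (some (a, u')) (some (w, Face.frown)) r) d) :
    GMove L (Exy x y) Rw.check (GConf.dup (u, v) (some (a, u')) (some (w, Face.frown)) r)
      (fbF L u v a u' w) := by
  unfold fbF
  split_ifs with f1 f2 f3
  · subst f1; exact GMove.dup1
  · exact GMove.dup2b f2.choose_spec
  · exact GMove.dup3a f3.choose_spec
  · cases hex with
    | dup1 => exact absurd rfl f1
    | dup2a h => exact absurd ⟨_, h⟩ f2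
    | dup2b h => exact absurd ⟨_, h⟩ f2
    | dup2c h hE => exact absurd ⟨_, h⟩ f2
    | dup3a h => exact absurd ⟨_, h⟩ f3
    | dup3c h hE => exact absurd ⟨_, h⟩ f3

theorem fbS_valid {u v : S} {a : A} {u' w : S} {r : Rw} {d : GConf S A}
    (hex : GMove L (Exy x y) Rw.check
      (GConf.dup (u, v) (some (a, u')) (some (w, Face.smile)) r) d) :
    GMove L (Exy x y) Rw.check (GConf.dup (u, v) (some (a, u')) (some (w, Face.smile)) r)
      (fbS L u v a u' w) := by
  unfold fbS
  split_ifs with f1 f3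
  · subst f1; exact GMove.dup1
  · exact GMove.dup3a f3.choose_spec
  · cases hex with
    | dup1 => exact absurd rfl f1
    | dup3a h => exact absurd ⟨_, h⟩ f3
    | dup3b h => exact absurd ⟨_, h⟩ f3
    | dup3c h hE => exact absurd ⟨_, h⟩ f3

theorem sig_valid : ValidStrategy GConf.dupOwned (GMove L (Exy x y) Rw.check) (sig L x y R) := by
  rintro c hdup ⟨d, hd⟩
  match c with
  | GConf.sp p c m r => exact absurd hdup (fun hh => hh)
  | GConf.dup (u, v) none m r => cases hd
  | GConf.dup (u, v) (some (a, u')) none r => cases hd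
  | GConf.dup (u, v) (some (a, u')) (some (w, Face.frown)) r =>
    show GMove _ _ _ _ (sig L x y R _)
    simp only [sig]
    split_ifs with h0 hb hc hdd hx
    · obtain ⟨ha, _⟩ := h0; subst ha; exact GMove.dup1
    · exact GMove.dup2b hb.choose_spec.1
    · exact GMove.dup2c hc.2.choose_spec.1 (smile_mem.mpr hc.1)
    · exact GMove.dup3a hdd.choose_spec.1.1
    · exact GMove.dup3c hdd.choose_spec.1.1 (frown_mem.mpr (x_cases hx))
    · exact fbF_valid hd
  | GConf.dup (u, v) (some (a, u')) (some (w, Face.smile)) r =>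
    show GMove _ _ _ _ (sig L x y R _)
    simp only [sig]
    split_ifs with g1 g2
    · exact GMove.dup3b g1.choose_spec.1
    · exact GMove.dup3c g2.2.choose_spec.1 (smile_mem.mpr g2.1)
    · exact fbS_valid hd


section PlayAnalysis

variable {L : LTS S A} {x y : XY} {R : S → S → Prop} {π : ℕ → Option (GConf S A)}

theorem buchi_smile
    (hplay : IsPlay (GMove L (Exy x y) Rw.check) π)
    (hcons : ConsistentWith GConf.dupOwned (sig L x y R) π)
    (hinf : InfinitePlay π)
    (hInvAll : ∀ i c, π i = some c → Inv L x y R c) (N : ℕ) :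
    ∀ (i : ℕ) (u v : S) (a : A) (u' wst : S) (r : Rw),
      ((π i = some (GConf.sp (u, v) (some (a, u')) (some (wst, Face.smile)) r) ∧
          2 * MeasS L R u' wst + 1 ≤ N) ∨
        (π i = some (GConf.dup (u, v) (some (a, u')) (some (wst, Face.smile)) r) ∧
          2 * MeasS L R u' wst ≤ N)) →
      ∃ j, i ≤ j ∧ ∃ c, π j = some c ∧ GConf.reward c := by
  induction N using Nat.strong_induction_on with
  | _ N ih =>
    rintro i u v a u' wst r (⟨hc, hN⟩ | ⟨hc, hN⟩)
    · obtain ⟨d, hd⟩ : ∃ d, π (i + 1) = some d := Option.ne_none_iff_exists'.mp (hinf (i + 1))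
      have hmv := hplay.1 i _ d hc hd
      cases hmv with
      | sp1 hcn =>
        obtain ⟨j, hj, hch⟩ := ih (2 * MeasS L R u' wst) (by omega) (i + 1) u v a u' wst
          Rw.star (Or.inr ⟨hd, le_rfl⟩)
        exact ⟨j, by omega, hch⟩
      | sp2b h hcn => exact ⟨i + 1, by omega, _, hd, rfl⟩
      | sp3 h => exact ⟨i + 1, by omega, _, hd, rfl⟩
    · obtain ⟨d, hd⟩ : ∃ d, π (i + 1) = some d := Option.ne_none_iff_exists'.mp (hinf (i + 1))
      have hcs := hcons i _ d hc trivial hd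
      subst hcs
      have hspec := sig_smile_spec (R := R) (hInvAll i _ hc)
      rcases hspec.2.2 with ⟨p, heq⟩ | ⟨p, w₂, heq, hlt⟩
      · rw [heq] at hd
        exact ⟨i + 1, by omega, _, hd, rfl⟩
      · obtain ⟨p1, p2⟩ := p
        rw [heq] at hd
        obtain ⟨j, hj, hch⟩ := ih (2 * MeasS L R u' w₂ + 1) (by omega) (i + 1) p1 p2 a u' w₂
          Rw.star (Or.inl ⟨hd, le_rfl⟩)
        exact ⟨j, by omega, hch⟩

theorem buchi_frown (hG : GoodR L x y R)
    (hplay : IsPlay (GMove L (Exy x y) Rw.check) π)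
    (hcons : ConsistentWith GConf.dupOwned (sig L x y R) π)
    (hinf : InfinitePlay π)
    (hInvAll : ∀ i c, π i = some c → Inv L x y R c) (N : ℕ) :
    ∀ (i : ℕ) (u v : S) (a : A) (u' wst : S) (r : Rw),
      ((π i = some (GConf.sp (u, v) (some (a, u')) (some (wst, Face.frown)) r) ∧
          2 * MeasF L x y R u a u' wst + 1 ≤ N) ∨
        (π i = some (GConf.dup (u, v) (some (a, u')) (some (wst, Face.frown)) r) ∧
          2 * MeasF L x y R u a u' wst ≤ N)) →
      ∃ j, i ≤ j ∧ ∃ c, π j = some c ∧ GConf.reward c := by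
  induction N using Nat.strong_induction_on with
  | _ N ih =>
    rintro i u v a u' wst r (⟨hc, hN⟩ | ⟨hc, hN⟩)
    · obtain ⟨d, hd⟩ : ∃ d, π (i + 1) = some d := Option.ne_none_iff_exists'.mp (hinf (i + 1))
      have hmv := hplay.1 i _ d hc hd
      cases hmv with
      | sp1 hcn =>
        obtain ⟨j, hj, hch⟩ := ih (2 * MeasF L x y R u a u' wst) (by omega) (i + 1) u v a u' wst
          Rw.star (Or.inr ⟨hd, le_rfl⟩)
        exact ⟨j, by omega, hch⟩
      | sp2b h hcn => exact ⟨i + 1, by omega, _, hd, rfl⟩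
      | sp3 h => exact ⟨i + 1, by omega, _, hd, rfl⟩
    · obtain ⟨d, hd⟩ : ∃ d, π (i + 1) = some d := Option.ne_none_iff_exists'.mp (hinf (i + 1))
      have hcs := hcons i _ d hc trivial hd
      subst hcs
      have hspec := sig_frown_spec hG (hInvAll i _ hc)
      rcases hspec.2.2 with ⟨p, heq⟩ | ⟨p, w₂, heq⟩ | ⟨v₂, w₂, heq, hlt⟩
      · rw [heq] at hd
        exact ⟨i + 1, by omega, _, hd, rfl⟩
      · obtain ⟨p1, p2⟩ := p
        rw [heq] at hd
        obtain ⟨j, hj, hch⟩ := buchi_smile hplay hcons hinf hInvAll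
          (2 * MeasS L R u' w₂ + 1) (i + 1) p1 p2 a u' w₂ Rw.star (Or.inl ⟨hd, le_rfl⟩)
        exact ⟨j, by omega, hch⟩
      · rw [heq] at hd
        obtain ⟨j, hj, hch⟩ := ih (2 * MeasF L x y R u a u' w₂ + 1) (by omega)
          (i + 1) u v₂ a u' w₂ Rw.star (Or.inl ⟨hd, le_rfl⟩)
        exact ⟨j, by omega, hch⟩

theorem game_win (hG : GoodR L x y R) {s t : S} (hst : R s t) :
    L.gbEquiv (Exy x y) s t := by
  refine ⟨sig L x y R, sig_valid, ?_⟩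
  intro π hplay hπ0 hcons
  have hInvAll : ∀ i c, π i = some c → Inv L x y R c := by
    intro i
    induction i with
    | zero =>
      intro c hc
      rw [hπ0] at hc
      cases hc
      exact hst
    | succ i ih =>
      intro c hc
      cases hi : π i with
      | none =>
        rw [hplay.2.2 i hi] at hc
        cases hc
      | some b =>
        have hmv := hplay.1 i b c hi hc
        by_cases hdup : GConf.dupOwned b
        · have hcs := hcons i b c hi hdup hc
          subst hcs
          have hb := ih _ hi
          cases b with
          | sp p cop mop r => exact absurd hdup (fun hh => hh)
          | dup p cop mop r =>
            obtain ⟨u, v⟩ := p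
            cases cop with
            | none =>
              cases mop with
              | none => exact hb.elim
              | some q => exact hb.elim
            | some q =>
              obtain ⟨a, u'⟩ := q
              cases mop with
              | none => exact hb.elim
              | some m =>
                obtain ⟨w, f⟩ := m
                cases f with
                | frown => exact (sig_frown_spec hG hb).2.1
                | smile => exact (sig_smile_spec hb).2.1
        · cases b with
          | sp p cop mop r => exact sp_step hG (ih _ hi) hmv
          | dup p cop mop r => exact absurd trivial hdup
  by_cases hinf : ∀ i, π i ≠ none
  · right
    refine ⟨hinf, ?_⟩
    intro n
    obtain ⟨c, hc⟩ : ∃ c, π n = some c := Option.ne_none_iff_exists'.mp (hinf n)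
    cases c with
    | sp p cop mop r =>
      obtain ⟨u, v⟩ := p
      cases cop with
      | none =>
        cases mop with
        | some q => exact ((hInvAll n _ hc).elim)
        | none =>
          obtain ⟨d, hd⟩ : ∃ d, π (n + 1) = some d :=
            Option.ne_none_iff_exists'.mp (hinf (n + 1))
          have hmv := hplay.1 n _ d hc hd
          cases hmv with
          | sp1 hcn => exact absurd rfl hcn
          | sp2a h =>
            obtain ⟨j, hj, hch⟩ := buchi_frown hG hplay hcons hinf hInvAll
              _ (n + 1) _ _ _ _ _ Rw.star (Or.inr ⟨hd, le_rfl⟩)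
            exact ⟨j, by omega, hch⟩
          | sp2b h hcn => exact ⟨n + 1, by omega, _, hd, rfl⟩
          | sp3 h => exact ⟨n + 1, by omega, _, hd, rfl⟩
      | some q =>
        obtain ⟨a, u'⟩ := q
        cases mop with
        | none => exact ((hInvAll n _ hc).elim)
        | some m =>
          obtain ⟨w, f⟩ := m
          cases f with
          | frown =>
            exact buchi_frown hG hplay hcons hinf hInvAll
              _ n _ _ _ _ _ _ (Or.inl ⟨hc, le_rfl⟩)
          | smile =>
            exact buchi_smile hplay hcons hinf hInvAll
              _ n _ _ _ _ _ _ (Or.inl ⟨hc, le_rfl⟩)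
    | dup p cop mop r =>
      obtain ⟨u, v⟩ := p
      cases cop with
      | none =>
        cases mop with
        | none => exact ((hInvAll n _ hc).elim)
        | some q => exact ((hInvAll n _ hc).elim)
      | some q =>
        obtain ⟨a, u'⟩ := q
        cases mop with
        | none => exact ((hInvAll n _ hc).elim)
        | some m =>
          obtain ⟨w, f⟩ := m
          cases f with
          | frown =>
            exact buchi_frown hG hplay hcons hinf hInvAll
              _ n _ _ _ _ _ _ (Or.inr ⟨hc, le_rfl⟩)
          | smile =>
            exact buchi_smile hplay hcons hinf hInvAll
              _ n _ _ _ _ _ _ (Or.inr ⟨hc, le_rfl⟩)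
  · left
    push_neg at hinf
    have hex : ∃ i, π i = none := hinf
    have hknone : π (Nat.find hex) = none := Nat.find_spec hex
    have hkpos : Nat.find hex ≠ 0 := by
      intro h0
      rw [h0, hπ0] at hknone
      cases hknone
    have hprev : π (Nat.find hex - 1) ≠ none := Nat.find_min hex (by omega)
    obtain ⟨c, hc⟩ := Option.ne_none_iff_exists'.mp hprev
    have hend : π (Nat.find hex - 1 + 1) = none := by
      rw [show Nat.find hex - 1 + 1 = Nat.find hex from by omega]
      exact hknone
    refine ⟨c, ⟨Nat.find hex - 1, hc, hend⟩, ?_⟩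
    intro hdup
    have hstuck := hplay.2.1 (Nat.find hex - 1) c hc hend
    have hb := hInvAll (Nat.find hex - 1) c hc
    cases c with
    | sp p cop mop r => exact hdup
    | dup p cop mop r =>
      obtain ⟨u, v⟩ := p
      cases cop with
      | none =>
        cases mop with
        | none => exact hb.elim
        | some q => exact hb.elim
      | some q =>
        obtain ⟨a, u'⟩ := q
        cases mop with
        | none => exact hb.elim
        | some m =>
          obtain ⟨w, f⟩ := m
          cases f with
          | frown => exact hstuck _ (sig_frown_spec hG hb).1
          | smile => exact hstuck _ (sig_smile_spec hb).1

end PlayAnalysis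

end Game

end Compl


/-- Completeness of the generic bisimulation game: if
`s ≈_{(x,y)} t` then Duplicator wins the `E(x,y)`-generic bisimulation game from
`⟨(s,t),†,†,*⟩_S`. -/
theorem genBisimilar_imp_gbEquiv {S : Type u} {A : Type v} (L : LTS S A)
    (x y : XY) (s t : S) (h : L.GenBisimilar x y s t) :
    L.gbEquiv (Exy x y) s t := by
  obtain ⟨R₀, hR₀, hst⟩ := h
  cases x with
  | o => exact Compl.game_win (Compl.goodR_o hR₀) hst
  | b => exact Compl.game_win Compl.goodR_b ⟨R₀, Compl.semi_of_genB hR₀, hst⟩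

end GamesBisim
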